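/- arXiv:1912.13315 — 5 statements merged into one kernel-verified Lean document; each statement's English description precedes it below -/
import Mathlib

section
/- Let H ∈ [0, 1/2), set R := artanh(2H), let C ≥ 1, and define g_C : ℝ → ℝ by g_C(s) = (2H·sinh s + C·√(1−4H²))/cosh s and M_C := R + arcosh(C). Then g_C(M_C) = 1, and for every s ∈ ℝ one has |g_C(s)| < 1 if and only if s < R − arcosh(C) or s > M_C. In particular (M_C, +∞) is the maximal interval containing +∞ on which |g_C| < 1. -/
open Real

/-- The inverse hyperbolic tangent. -/
noncomputable def artanh (x : ℝ) : ℝ := Real.log ((1 + x) / (1 - x)) / 2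

/-- The inverse hyperbolic cosine (on `[1, ∞)`). -/
noncomputable def arcosh (x : ℝ) : ℝ := Real.log (x + Real.sqrt (x ^ 2 - 1))

/-!
Put `R = artanh (2H)`, so that `cosh R = 1 / √(1 - 4H²)` and `sinh R = 2H cosh R`. Then
`g_C s = (sinh R sinh s + C) / (cosh R cosh s)`, and since
`cosh R cosh s ∓ sinh R sinh s = cosh (s ∓ R)`, the inequality `|g_C s| < 1` reduces to
`C < cosh (s - R)`, i.e. `arcosh C < |s - R|`, while `g_C s = 1` exactly when `cosh (s - R) = C`.
A connected set reaching `+∞` on which `|g_C| < 1` avoids `M_C`, so lies to its right.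
-/

theorem arcosh_eq_real_arcosh : _root_.arcosh = Real.arcosh := rfl

theorem artanh_eq_real_artanh {x : ℝ} (hx : x ∈ Set.Icc (-1) 1) :
    _root_.artanh x = Real.artanh x := by
  rw [Real.artanh_eq_half_log hx, _root_.artanh]
  ring

theorem div_cosh_eq_sinh_artanh_mul_sinh_add_div {a c : ℝ} (ha : a ∈ Set.Ioo (-1) 1) (s : ℝ) :
    (a * sinh s + c * √(1 - a ^ 2)) / cosh s =
      (sinh (Real.artanh a) * sinh s + c) / (cosh (Real.artanh a) * cosh s) := by
  have hsqrt : 0 < √(1 - a ^ 2) := Real.sqrt_pos.2 (by nlinarith [ha.1, ha.2])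
  rw [Real.sinh_artanh ha, Real.cosh_artanh ha]
  field_simp

section HyperbolicRotation

variable {R s c : ℝ}

theorem sinh_mul_sinh_add_div_cosh_mul_cosh_eq_one_iff :
    (sinh R * sinh s + c) / (cosh R * cosh s) = 1 ↔ cosh (s - R) = c := by
  rw [div_eq_one_iff_eq (mul_pos (cosh_pos R) (cosh_pos s)).ne', cosh_sub]
  constructor <;> intro h <;> linarith

theorem abs_sinh_mul_sinh_add_div_cosh_mul_cosh_lt_one_iff (hc : -1 < c) :
    |(sinh R * sinh s + c) / (cosh R * cosh s)| < 1 ↔ c < cosh (s - R) := by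
  have hpos : 0 < cosh R * cosh s := mul_pos (cosh_pos R) (cosh_pos s)
  rw [abs_div, abs_of_pos hpos, div_lt_one hpos, abs_lt, cosh_sub]
  have hlower : -c < cosh (s + R) := by linarith [one_le_cosh (s + R)]
  rw [cosh_add] at hlower
  constructor
  · rintro ⟨-, h⟩
    linarith
  · intro h
    constructor <;> linarith

end HyperbolicRotation

theorem lt_cosh_iff_arcosh_lt_abs {c : ℝ} (hc : 1 ≤ c) (x : ℝ) :
    c < cosh x ↔ Real.arcosh c < |x| := by
  conv_lhs => rw [← Real.cosh_arcosh hc]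
  rw [cosh_lt_cosh, abs_of_nonneg (Real.arcosh_nonneg hc)]

theorem IsPreconnected.subset_Ioi_of_notMem {α : Type*} [LinearOrder α] [TopologicalSpace α]
    [OrderClosedTopology α] {I : Set α} (hI : IsPreconnected I) {m t : α} (hm : m ∉ I)
    (ht : t ∈ I) (hmt : m < t) : I ⊆ Set.Ioi m := fun _ hs =>
  lt_of_not_ge fun hsm => hm (hI.Icc_subset hs ht ⟨hsm, hmt.le⟩)

/-- For `H ∈ [0, 1/2)`, `R = artanh(2H)`, `C ≥ 1`,
`g_C(s) = (2H·sinh s + C·√(1−4H²))/cosh s` and `M_C = R + arcosh C`,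
one has `g_C(M_C) = 1`, and `|g_C(s)| < 1` iff `s < R − arcosh C` or `s > M_C`;
in particular `(M_C, ∞)` is the maximal interval containing `+∞` on which `|g_C| < 1`. -/
theorem gC_eq_one_at_MC_and_abs_lt_one_iff
    (H : ℝ) (hH0 : 0 ≤ H) (hH : H < 1 / 2) (R : ℝ) (hR : R = _root_.artanh (2 * H))
    (C : ℝ) (hC : 1 ≤ C) (g : ℝ → ℝ)
    (hg : ∀ s : ℝ, g s = (2 * H * Real.sinh s + C * Real.sqrt (1 - 4 * H ^ 2)) / Real.cosh s)
    (M : ℝ) (hM : M = R + _root_.arcosh C) :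
    g M = 1 ∧
    (∀ s : ℝ, |g s| < 1 ↔ (s < R - _root_.arcosh C ∨ M < s)) ∧
    ∀ I : Set ℝ, IsConnected I → (∀ s ∈ I, |g s| < 1) →
      (∀ b : ℝ, ∃ s ∈ I, b < s) → I ⊆ Set.Ioi M := by
  have ha : 2 * H ∈ Set.Ioo (-1) 1 := ⟨by linarith, by linarith⟩
  rw [artanh_eq_real_artanh (Set.Ioo_subset_Icc_self ha)] at hR
  rw [arcosh_eq_real_arcosh] at hM ⊢
  have hg' : ∀ s, g s = (sinh R * sinh s + C) / (cosh R * cosh s) := fun s => by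
    rw [hg, hR, ← div_cosh_eq_sinh_artanh_mul_sinh_add_div ha]
    ring_nf
  have hgM : g M = 1 := by
    rw [hg', sinh_mul_sinh_add_div_cosh_mul_cosh_eq_one_iff, hM, add_sub_cancel_left,
      Real.cosh_arcosh hC]
  have habs : ∀ s, |g s| < 1 ↔ s < R - Real.arcosh C ∨ M < s := fun s => by
    rw [hg', abs_sinh_mul_sinh_add_div_cosh_mul_cosh_lt_one_iff (by linarith),
      lt_cosh_iff_arcosh_lt_abs hC, lt_abs, hM]
    constructor <;> rintro (h | h) <;> [right; left; right; left] <;> linarith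
  refine ⟨hgM, habs, fun I hI hlt hub => ?_⟩
  obtain ⟨t, ht, hMt⟩ := hub M
  exact hI.isPreconnected.subset_Ioi_of_notMem (fun hMI => by simpa [hgM] using hlt M hMI) ht hMt
end

section
/- Let H ∈ [0, 1/2), set R := artanh(2H), and define g₁ : ℝ → ℝ by g₁(s) = (2H·sinh s + √(1−4H²))/cosh s. Then for every s > R one has |g₁(s)| < 1 and g₁(s)/√(1 − g₁(s)²) = (sinh(R)·sinh(s) + 1)/(sinh(s) − sinh(R)). -/
/-! With `q = √(1 - 4H²)` one has `sinh R = 2H/q` and `cosh R = 1/q`, so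
`g₁(s) = (sinh R sinh s + 1)/(cosh R cosh s)`. The numerator `a`, the denominator `c` and
`d = sinh s - sinh R` satisfy `c² = a² + d²`, and `d > 0` exactly when `s > R`; then `a/c` is the
sine of an angle whose cosine is `d/c`, and the slope `a/c / √(1 - (a/c)²)` is `a/d`. -/

open Real

theorem sq_cosh_mul_cosh (x y : ℝ) :
    (cosh x * cosh y) ^ 2 = (sinh x * sinh y + 1) ^ 2 + (sinh y - sinh x) ^ 2 := by
  linear_combination cosh y ^ 2 * cosh_sq x + (sinh x ^ 2 + 1) * cosh_sq y

theorem abs_div_lt_one_and_div_sqrt_one_sub_sq {a c d : ℝ} (hc : 0 < c) (hd : 0 < d)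
    (h : c ^ 2 = a ^ 2 + d ^ 2) :
    |a / c| < 1 ∧ a / c / √(1 - (a / c) ^ 2) = a / d := by
  have hcos : 1 - (a / c) ^ 2 = (d / c) ^ 2 := by
    field_simp
    linarith
  have hdc : 0 < d / c := div_pos hd hc
  refine ⟨?_, ?_⟩
  · rw [← sq_lt_one_iff_abs_lt_one]
    nlinarith
  · rw [hcos, sqrt_sq hdc.le]
    field_simp

/-- For `H ∈ [0, 1/2)`, `R = artanh(2H)` and
`g₁(s) = (2H·sinh s + √(1−4H²))/cosh s`, for every `s > R` one has `|g₁(s)| < 1`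
and `g₁(s)/√(1 − g₁(s)²) = (sinh R·sinh s + 1)/(sinh s − sinh R)`. -/
theorem g_one_slope_formula
    (H : ℝ) (hH0 : 0 ≤ H) (hH : H < 1 / 2) (R : ℝ) (hR : R = _root_.artanh (2 * H))
    (g : ℝ → ℝ)
    (hg : ∀ s : ℝ, g s = (2 * H * Real.sinh s + Real.sqrt (1 - 4 * H ^ 2)) / Real.cosh s) :
    ∀ s : ℝ, R < s →
      |g s| < 1 ∧
      g s / Real.sqrt (1 - g s ^ 2) =
        (Real.sinh R * Real.sinh s + 1) / (Real.sinh s - Real.sinh R) := by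
  intro s hs
  have h2H : 2 * H ∈ Set.Ioo (-1) 1 := ⟨by linarith, by linarith⟩
  have hR' : R = Real.artanh (2 * H) := by
    rw [hR, artanh_eq_real_artanh (Set.Ioo_subset_Icc_self h2H)]
  have hq : 0 < √(1 - 4 * H ^ 2) := sqrt_pos.2 (by nlinarith)
  have hsinhR : sinh R = 2 * H / √(1 - 4 * H ^ 2) := by
    rw [hR', sinh_artanh h2H, mul_pow]; norm_num
  have hcoshR : cosh R = 1 / √(1 - 4 * H ^ 2) := by
    rw [hR', cosh_artanh h2H, mul_pow]; norm_num
  have hgs : g s = (sinh R * sinh s + 1) / (cosh R * cosh s) := by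
    rw [hg, hsinhR, hcoshR, div_mul_eq_mul_div, div_mul_eq_mul_div, div_add_one hq.ne',
      one_mul, div_div_div_cancel_right₀ hq.ne']
  rw [hgs]
  exact abs_div_lt_one_and_div_sqrt_one_sub_sq (by positivity)
    (sub_pos.2 (sinh_lt_sinh.2 hs)) (sq_cosh_mul_cosh R s)
end

section
/- Let H ∈ (0, 1/2), let C ∈ ℝ, and define g_C : ℝ → ℝ by g_C(s) = (2H·sinh s + C·√(1−4H²))/cosh s. Let s₀ ∈ ℝ be such that |g_C(t)| < 1 for all t ≥ s₀. Then the function s ↦ ∫_{s₀}^{s} g_C(t)/√(1 − g_C(t)²) dt tends to +∞ as s → +∞. -/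
open Real Filter

/-- For `H ∈ (0, 1/2)`, `C ∈ ℝ`,
`g_C(s) = (2H·sinh s + C·√(1−4H²))/cosh s`, and `s₀` with `|g_C(t)| < 1` for all
`t ≥ s₀`, the profile function `s ↦ ∫_{s₀}^s g_C(t)/√(1 − g_C(t)²) dt` tends to
`+∞` as `s → +∞`. -/
theorem profile_tendsto_atTop
    (H : ℝ) (hH0 : 0 < H) (hH : H < 1 / 2) (C : ℝ) (g : ℝ → ℝ)
    (hg : ∀ s : ℝ, g s = (2 * H * Real.sinh s + C * Real.sqrt (1 - 4 * H ^ 2)) / Real.cosh s)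
    (s₀ : ℝ) (hs₀ : ∀ t : ℝ, s₀ ≤ t → |g t| < 1) :
    Tendsto (fun s : ℝ => ∫ t in s₀..s, g t / Real.sqrt (1 - g t ^ 2)) atTop atTop := by
  have h4 : 0 < 1 - 4 * H ^ 2 := by nlinarith
  set c : ℝ := C * Real.sqrt (1 - 4 * H ^ 2) with hc
  set f : ℝ → ℝ := fun t => g t / Real.sqrt (1 - g t ^ 2) with hf
  have hgeq : g = fun s => (2 * H * Real.sinh s + c) / Real.cosh s := funext hg
  have hgc : Continuous g := by
    rw [hgeq]
    exact ((continuous_const.mul Real.continuous_sinh).add continuous_const).div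
      Real.continuous_cosh (fun x => (Real.cosh_pos x).ne')
  have hpos : ∀ t, s₀ ≤ t → 0 < 1 - g t ^ 2 := by
    intro t ht
    have h := hs₀ t ht
    have : g t ^ 2 < 1 := by
      have := sq_abs (g t)
      nlinarith [abs_nonneg (g t)]
    linarith
  have hfc : ContinuousOn f (Set.Ici s₀) := by
    apply hgc.continuousOn.div
    · exact (Real.continuous_sqrt.comp (continuous_const.sub (hgc.pow 2))).continuousOn
    · intro t ht
      exact (Real.sqrt_pos.2 (hpos t ht)).ne'
  -- the limit of g at +∞ is 2H
  have hglim : Tendsto g atTop (nhds (2 * H)) := by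
    have hcosh : Tendsto Real.cosh atTop atTop := by
      apply tendsto_atTop_mono (fun x => ?_) (Real.tendsto_exp_atTop.atTop_div_const two_pos)
      rw [Real.cosh_eq]
      have := Real.exp_pos (-x)
      linarith
    have h1 : Tendsto (fun s : ℝ => (Real.cosh s)⁻¹) atTop (nhds 0) :=
      hcosh.inv_tendsto_atTop
    have h2 : Tendsto (fun s : ℝ => Real.exp (-s)) atTop (nhds 0) :=
      Real.tendsto_exp_neg_atTop_nhds_zero
    have h3 : Tendsto (fun s : ℝ => (c - 2 * H * Real.exp (-s)) * (Real.cosh s)⁻¹)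
        atTop (nhds 0) := by
      have := (((tendsto_const_nhds (x := c)).sub (h2.const_mul (2 * H))).mul h1)
      simpa using this
    have heq : ∀ s : ℝ, g s - 2 * H = (c - 2 * H * Real.exp (-s)) * (Real.cosh s)⁻¹ := by
      intro s
      rw [hgeq]
      have hch := (Real.cosh_pos s).ne'
      have hcs : Real.cosh s - Real.sinh s = Real.exp (-s) := Real.cosh_sub_sinh s
      field_simp
      nlinarith [hcs]
    have : Tendsto (fun s => g s - 2 * H) atTop (nhds 0) := by
      simpa [heq] using h3
    have := this.add (tendsto_const_nhds (x := 2 * H))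
    simpa using this
  -- the limit of f at +∞
  set L : ℝ := 2 * H / Real.sqrt (1 - 4 * H ^ 2) with hL
  have hsq : Real.sqrt (1 - 4 * H ^ 2) ≠ 0 := (Real.sqrt_pos.2 h4).ne'
  have hLpos : 0 < L := div_pos (by linarith) (Real.sqrt_pos.2 h4)
  have hflim : Tendsto f atTop (nhds L) := by
    have hden : Tendsto (fun t => Real.sqrt (1 - g t ^ 2)) atTop
        (nhds (Real.sqrt (1 - 4 * H ^ 2))) := by
      have : Tendsto (fun t => 1 - g t ^ 2) atTop (nhds (1 - 4 * H ^ 2)) := by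
        have := tendsto_const_nhds (x := (1:ℝ)) (f := atTop) |>.sub (hglim.pow 2)
        convert this using 2
        ring
      exact (Real.continuous_sqrt.tendsto _).comp this
    exact hglim.div hden hsq
  -- eventually f ≥ L/2
  have hev : ∀ᶠ t in atTop, L / 2 < f t :=
    hflim.eventually (eventually_gt_nhds (by linarith))
  obtain ⟨a, ha⟩ := eventually_atTop.1 hev
  set s₁ : ℝ := max a s₀ with hs₁
  have hs₁a : a ≤ s₁ := le_max_left _ _
  have hs₁0 : s₀ ≤ s₁ := le_max_right _ _
  -- integrability
  have hint : ∀ x y : ℝ, s₀ ≤ x → s₀ ≤ y → IntervalIntegrable f MeasureTheory.volume x y := by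
    intro x y hx hy
    apply (hfc.mono ?_).intervalIntegrable
    intro z hz
    rcases Set.mem_uIcc.1 hz with ⟨h1, _⟩ | ⟨h1, _⟩
    · exact le_trans hx h1
    · exact le_trans hy h1
  set K : ℝ := ∫ t in s₀..s₁, f t with hK
  have hbound : ∀ s : ℝ, s₁ ≤ s → K + (s - s₁) * (L / 2) ≤ ∫ t in s₀..s, f t := by
    intro s hs
    have hi1 := hint s₀ s₁ le_rfl hs₁0
    have hi2 := hint s₁ s hs₁0 (le_trans hs₁0 hs)
    rw [← intervalIntegral.integral_add_adjacent_intervals hi1 hi2]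
    have h5 : (s - s₁) * (L / 2) ≤ ∫ t in s₁..s, f t := by
      have h6 := intervalIntegral.integral_mono_on hs (intervalIntegrable_const (c := L / 2)) hi2
        (fun x hx => le_of_lt (ha x (le_trans hs₁a hx.1)))
      rw [intervalIntegral.integral_const, smul_eq_mul] at h6
      exact h6
    linarith
  -- conclude
  have htb : Tendsto (fun s : ℝ => K + (s - s₁) * (L / 2)) atTop atTop := by
    apply tendsto_atTop_add_const_left
    apply Tendsto.atTop_mul_const (by linarith : (0:ℝ) < L / 2)
    exact tendsto_atTop_add_const_right atTop (-s₁) tendsto_id |>.congr (fun x => by simp only [id]; ring)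
  exact tendsto_atTop_mono' atTop (eventually_atTop.2 ⟨s₁, hbound⟩) htb
end

section
/- Let H ∈ [0, 1/2] and r > 0. Then for every t > 0 one has 2H·(cosh(r+t) − cosh(r)) + sinh(r) < sinh(r+t); in particular sinh²(r+t) − (2H·(cosh(r+t) − cosh(r)) + sinh(r))² > 0, so the integrand defining the unduloid profile function is well defined for all t > 0. -/
open Real

/-- For `H ∈ [0, 1/2]` and `r > 0`, for every `t > 0` one has
`2H·(cosh(r+t) − cosh r) + sinh r < sinh(r+t)`; in particular
`sinh²(r+t) − (2H·(cosh(r+t) − cosh r) + sinh r)² > 0`. -/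
theorem unduloid_integrand_well_defined
    (H : ℝ) (hH0 : 0 ≤ H) (hH : H ≤ 1 / 2) (r : ℝ) (hr : 0 < r) :
    ∀ t : ℝ, 0 < t →
      (2 * H * (Real.cosh (r + t) - Real.cosh r) + Real.sinh r < Real.sinh (r + t)) ∧
      0 < Real.sinh (r + t) ^ 2 -
          (2 * H * (Real.cosh (r + t) - Real.cosh r) + Real.sinh r) ^ 2 := by
  intro t ht
  have hc : Real.cosh r < Real.cosh (r + t) := by
    rw [Real.cosh_lt_cosh]
    rw [abs_of_pos hr, abs_of_pos (by linarith)]; linarith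
  have hkey : Real.cosh (r + t) - Real.sinh (r + t) < Real.cosh r - Real.sinh r := by
    rw [Real.cosh_sub_sinh, Real.cosh_sub_sinh]
    exact Real.exp_lt_exp.2 (by linarith)
  have hlt : 2 * H * (Real.cosh (r + t) - Real.cosh r) + Real.sinh r < Real.sinh (r + t) := by
    nlinarith [hc, hkey]
  refine ⟨hlt, ?_⟩
  have hs : 0 < Real.sinh r := by positivity
  have hge : 0 < 2 * H * (Real.cosh (r + t) - Real.cosh r) + Real.sinh r := by nlinarith
  nlinarith
end

section
/- Let H ∈ [0, 1/2) and s > 0, and let θ = θ(s) := arccos((1−2H)·e^{−s} + 2H) ∈ (0, π). Then the improper integral ∫₀ˢ (2H + (1−2H)·e^{−t})/√(1 − (2H + (1−2H)·e^{−t})²) dt converges (the integrand blows up as t → 0⁺) and equals θ + (4H/√(1−4H²))·artanh(√((1+2H)/(1−2H))·tan(θ/2)). -/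
open Real MeasureTheory

/-!
Put `θ(t) = arccos (2H + (1 - 2H) e^{-t})`. Since `θ' = (cos θ - 2H) / sin θ`, the integrand
`dt` becomes `cos θ / (cos θ - 2H) dθ = (1 + 2H / (cos θ - 2H)) dθ`, and the Weierstrass
substitution `x = tan (θ / 2)` integrates the second term to the `artanh`. This primitive is
continuous on `[0, s]`, vanishes at `t = 0` (where `θ = 0`), and the integrand is nonnegative,
so the improper integral converges to its increment.
-/

open Set

lemma integrableOn_Ioc_and_setIntegral_eq_sub_of_hasDerivAt_of_nonneg {f F : ℝ → ℝ} {a b : ℝ}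
    (hab : a ≤ b) (hcont : ContinuousOn F (Icc a b))
    (hderiv : ∀ x ∈ Ioo a b, HasDerivAt F (f x) x) (hf : ∀ x ∈ Ioo a b, 0 ≤ f x) :
    IntegrableOn f (Ioc a b) ∧ ∫ x in Ioc a b, f x = F b - F a := by
  have hint : IntegrableOn f (Ioc a b) :=
    intervalIntegral.integrableOn_deriv_of_nonneg hcont hderiv hf
  refine ⟨hint, ?_⟩
  rw [← intervalIntegral.integral_of_le hab]
  exact intervalIntegral.integral_eq_sub_of_hasDeriv_right_of_le hab hcont
    (fun x hx => (hderiv x hx).hasDerivWithinAt)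
    ((intervalIntegrable_iff_integrableOn_Ioc_of_le hab).2 hint)

lemma add_mul_exp_neg_mem_Ioc {a t : ℝ} (ha : a < 1) (ht : 0 ≤ t) :
    a + (1 - a) * exp (-t) ∈ Ioc a 1 := by
  have h₀ := exp_pos (-t)
  have h₁ := exp_le_one_iff.2 (neg_nonpos.2 ht)
  constructor <;> nlinarith

lemma add_mul_exp_neg_lt_one {a t : ℝ} (ha : a < 1) (ht : 0 < t) :
    a + (1 - a) * exp (-t) < 1 := by
  have h := exp_lt_one_iff.2 (neg_lt_zero.2 ht)
  nlinarith

lemma hasDerivAt_arccos_add_mul_exp_neg {a c t : ℝ} (ht : a + c * exp (-t) ∈ Ioo (-1) 1) :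
    HasDerivAt (fun t => arccos (a + c * exp (-t)))
      (c * exp (-t) / √(1 - (a + c * exp (-t)) ^ 2)) t := by
  have hexp : HasDerivAt (fun t => a + c * exp (-t)) (-(c * exp (-t))) t := by
    simpa using ((hasDerivAt_neg t).exp.const_mul c).const_add a
  refine ((hasDerivAt_arccos ht.1.ne' ht.2.ne).comp t hexp).congr_deriv ?_
  ring

lemma hasDerivAt_artanh {x : ℝ} (hx : x ∈ Ioo (-1) 1) :
    HasDerivAt _root_.artanh (1 / (1 - x ^ 2)) x := by
  obtain ⟨hx₁, hx₂⟩ := hx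
  have hquot : HasDerivAt (fun y => (1 + y) / (1 - y)) (2 / (1 - x) ^ 2) x :=
    (((hasDerivAt_id' x).const_add 1).div ((hasDerivAt_id' x).const_sub 1)
      (sub_ne_zero.2 hx₂.ne')).congr_deriv (by ring)
  have hpos : 0 < (1 + x) / (1 - x) := div_pos (by linarith) (by linarith)
  refine ((hquot.log hpos.ne').div_const 2).congr_deriv ?_
  have h₁ : 1 + x ≠ 0 := by linarith
  have h₂ : 1 - x ≠ 0 := by linarith
  have h₃ : 1 - x ^ 2 ≠ 0 := by nlinarith
  field_simp
  ring

lemma hasDerivAt_artanh_mul_tan_half {a θ : ℝ} (ha : a ∈ Ioo (-1) 1) (hθ : θ ∈ Ioo (-π) π)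
    (hcos : a < cos θ) :
    HasDerivAt (fun φ => _root_.artanh (√((1 + a) / (1 - a)) * tan (φ / 2)))
      (√(1 - a ^ 2) / (2 * (cos θ - a))) θ := by
  obtain ⟨ha₁, ha₂⟩ := ha
  set k := √((1 + a) / (1 - a))
  have hk : k ^ 2 = (1 + a) / (1 - a) := sq_sqrt (div_pos (by linarith) (by linarith)).le
  have hk_mul : k * (1 - a) = √(1 - a ^ 2) := by
    rw [← sqrt_sq (by linarith : 0 ≤ 1 - a), ← sqrt_mul (div_pos (by linarith) (by linarith)).le]
    congr 1
    have : 1 - a ≠ 0 := by linarith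
    field_simp
    ring
  have hc : 0 < cos (θ / 2) := cos_pos_of_mem_Ioo ⟨by linarith [hθ.1], by linarith [hθ.2]⟩
  have hcos_half : cos θ = 2 * cos (θ / 2) ^ 2 - 1 := by
    rw [← cos_two_mul]; ring_nf
  have hone_sub : 1 - (k * tan (θ / 2)) ^ 2 = (cos θ - a) / ((1 - a) * cos (θ / 2) ^ 2) := by
    rw [mul_pow, hk, tan_eq_sin_div_cos, hcos_half]
    field_simp
    linear_combination -(1 + a) * sin_sq_add_cos_sq (θ / 2)
  have hx : k * tan (θ / 2) ∈ Ioo (-1) 1 := by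
    have : 0 < 1 - (k * tan (θ / 2)) ^ 2 := by
      rw [hone_sub]; exact div_pos (by linarith) (by positivity)
    rw [mem_Ioo, ← abs_lt, ← sq_lt_one_iff_abs_lt_one]; linarith
  have htan := (Real.hasDerivAt_tan hc.ne').comp θ ((hasDerivAt_id' θ).div_const 2)
  refine ((hasDerivAt_artanh hx).comp θ (htan.const_mul k)).congr_deriv ?_
  have : cos θ - a ≠ 0 := by linarith
  rw [hone_sub, ← hk_mul]
  field_simp

/-- The horonduloid profile as a function of the angle `θ = arccos (2H + (1 - 2H) e^{-t})`. -/
noncomputable def horonduloidAngleProfile (H θ : ℝ) : ℝ :=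
  θ + 4 * H / √(1 - 4 * H ^ 2) * _root_.artanh (√((1 + 2 * H) / (1 - 2 * H)) * tan (θ / 2))

lemma horonduloidAngleProfile_zero (H : ℝ) : horonduloidAngleProfile H 0 = 0 := by
  simp [horonduloidAngleProfile, _root_.artanh]

lemma hasDerivAt_horonduloidAngleProfile {H θ : ℝ} (hH : H ∈ Ioo (-(1 / 2)) (1 / 2))
    (hθ : θ ∈ Ioo (-π) π) (hcos : 2 * H < cos θ) :
    HasDerivAt (horonduloidAngleProfile H) (cos θ / (cos θ - 2 * H)) θ := by
  have h2H : 2 * H ∈ Ioo (-1) 1 := ⟨by linarith [hH.1], by linarith [hH.2]⟩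
  have hsqrt : 0 < √(1 - 4 * H ^ 2) := sqrt_pos.2 (by nlinarith [h2H.1, h2H.2])
  refine ((hasDerivAt_id' θ).add ((hasDerivAt_artanh_mul_tan_half h2H hθ hcos).const_mul
    (4 * H / √(1 - 4 * H ^ 2)))).congr_deriv ?_
  rw [show (2 * H) ^ 2 = 4 * H ^ 2 by ring]
  set d := cos θ - 2 * H with hd
  have hne : d ≠ 0 := by linarith
  field_simp
  linear_combination hd

lemma hasDerivAt_horonduloidAngleProfile_arccos {H x : ℝ} (hH : H ∈ Ioo (-(1 / 2)) (1 / 2))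
    (hx : x ∈ Ioc (2 * H) 1) :
    HasDerivAt (horonduloidAngleProfile H) (x / (x - 2 * H)) (arccos x) := by
  obtain ⟨hx₁, hx₂⟩ := hx
  have hcos : cos (arccos x) = x := cos_arccos (by linarith [hH.1]) hx₂
  have harccos : arccos x ∈ Ioo (-π) π :=
    ⟨by linarith [arccos_nonneg x, pi_pos], arccos_lt_pi.2 (by linarith [hH.1])⟩
  simpa only [hcos] using hasDerivAt_horonduloidAngleProfile hH harccos (hcos.symm ▸ hx₁)

/-- For `H ∈ [0, 1/2)`, `s > 0` and
`θ = arccos((1−2H)e^{−s} + 2H)`, the improper integral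
`∫₀ˢ (2H + (1−2H)e^{−t})/√(1 − (2H + (1−2H)e^{−t})²) dt` converges and equals
`θ + (4H/√(1−4H²))·artanh(√((1+2H)/(1−2H))·tan(θ/2))`. -/
theorem horonduloid_profile_formula
    (H : ℝ) (hH0 : 0 ≤ H) (hH : H < 1 / 2) (s : ℝ) (hs : 0 < s)
    (θ : ℝ) (hθ : θ = Real.arccos ((1 - 2 * H) * Real.exp (-s) + 2 * H)) :
    IntegrableOn (fun t : ℝ =>
        (2 * H + (1 - 2 * H) * Real.exp (-t)) /
          Real.sqrt (1 - (2 * H + (1 - 2 * H) * Real.exp (-t)) ^ 2)) (Set.Ioc 0 s) ∧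
    (∫ t in Set.Ioc (0:ℝ) s,
        (2 * H + (1 - 2 * H) * Real.exp (-t)) /
          Real.sqrt (1 - (2 * H + (1 - 2 * H) * Real.exp (-t)) ^ 2)) =
      θ + (4 * H / Real.sqrt (1 - 4 * H ^ 2)) *
        _root_.artanh (Real.sqrt ((1 + 2 * H) / (1 - 2 * H)) * Real.tan (θ / 2)) := by
  have hH' : H ∈ Ioo (-(1 / 2)) (1 / 2) := ⟨by linarith, hH⟩
  set u : ℝ → ℝ := fun t => 2 * H + (1 - 2 * H) * exp (-t)
  have hu_mem : ∀ t, 0 ≤ t → u t ∈ Ioc (2 * H) 1 := fun t ht =>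
    add_mul_exp_neg_mem_Ioc (by linarith) ht
  have hcont : ContinuousOn (fun t => horonduloidAngleProfile H (arccos (u t))) (Icc 0 s) :=
    fun t ht => (ContinuousAt.comp (f := fun t => arccos (u t))
      (hasDerivAt_horonduloidAngleProfile_arccos hH' (hu_mem t ht.1)).continuousAt
      (by fun_prop)).continuousWithinAt
  have hderiv : ∀ t ∈ Ioo 0 s, HasDerivAt (fun t => horonduloidAngleProfile H (arccos (u t)))
      (u t / √(1 - u t ^ 2)) t := by
    intro t ht
    obtain ⟨hu₁, -⟩ := hu_mem t ht.1.le
    have hu₂ : u t < 1 := add_mul_exp_neg_lt_one (by linarith) ht.1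
    refine ((hasDerivAt_horonduloidAngleProfile_arccos hH' (hu_mem t ht.1.le)).comp t
      (hasDerivAt_arccos_add_mul_exp_neg ⟨by linarith, hu₂⟩)).congr_deriv ?_
    have : u t - 2 * H ≠ 0 := by linarith
    field_simp
    ring
  have hnonneg : ∀ t ∈ Ioo 0 s, 0 ≤ u t / √(1 - u t ^ 2) := fun t ht =>
    div_nonneg (by linarith [(hu_mem t ht.1.le).1]) (sqrt_nonneg _)
  obtain ⟨hint, hval⟩ :=
    integrableOn_Ioc_and_setIntegral_eq_sub_of_hasDerivAt_of_nonneg hs.le hcont hderiv hnonneg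
  refine ⟨hint, ?_⟩
  have hu_zero : u 0 = 1 := by simp [u]
  rw [hval, hu_zero, arccos_one, horonduloidAngleProfile_zero, sub_zero, hθ, add_comm _ (2 * H)]
  rfl
end
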